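/- arXiv:2302.11471 — 4 statements merged into one kernel-verified Lean document; each statement's English description precedes it below -/
import Mathlib

section
/- Let ℓ > 1 and B a 3×3 skew-symmetric integer matrix with entries b_{12}, b_{13}, b_{23} above the diagonal and gcd(b_{12}, b_{13}, b_{23}, ℓ) = 1. Define f_1 as the gcd of all first coordinates u_1 of integer vectors u = (u_1, u_2, u_3) with B·u ≡ 0 mod ℓ. Then f_1 = gcd(b_{23}, ℓ). -/
/-- Let `ℓ > 1` and `b₁₂, b₁₃, b₂₃` with `gcd(b₁₂, b₁₃, b₂₃, ℓ) = 1`.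
Let `f₁` be the gcd of all first coordinates `u₁` of integer vectors `u` with
`B·u ≡ 0 (mod ℓ)`. Then `f₁ = gcd(b₂₃, ℓ)`. We express that `gcd(b₂₃, ℓ)` is the
gcd of the set of first coordinates: it divides every such `u₁`, and every common
divisor of all such `u₁` divides it. -/
theorem stmt_7 (ℓ : ℕ) (hℓ : 1 < ℓ) (b12 b13 b23 : ℤ)
    (hgcd : Nat.gcd (Nat.gcd (Nat.gcd b12.natAbs b13.natAbs) b23.natAbs) ℓ = 1) :
    (∀ u1 u2 u3 : ℤ,
        ((ℓ : ℤ) ∣ b12 * u2 + b13 * u3 ∧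
         (ℓ : ℤ) ∣ -b12 * u1 + b23 * u3 ∧
         (ℓ : ℤ) ∣ -b13 * u1 - b23 * u2) →
        (Int.gcd b23 ℓ : ℤ) ∣ u1) ∧
    (∀ d : ℤ,
        (∀ u1 u2 u3 : ℤ,
          ((ℓ : ℤ) ∣ b12 * u2 + b13 * u3 ∧
           (ℓ : ℤ) ∣ -b12 * u1 + b23 * u3 ∧
           (ℓ : ℤ) ∣ -b13 * u1 - b23 * u2) →
          d ∣ u1) →
        d ∣ (Int.gcd b23 ℓ : ℤ)) := by
  constructor
  · intro u1 u2 u3 ⟨h1, h2, h3⟩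
    set g : ℤ := (Int.gcd b23 ℓ : ℤ) with hg
    have hgb : g ∣ b23 := Int.gcd_dvd_left b23 ℓ
    have hgl : g ∣ (ℓ : ℤ) := Int.gcd_dvd_right b23 ℓ
    -- g divides b12 * u1 and b13 * u1
    have h12 : g ∣ b12 * u1 := by
      have : g ∣ b23 * u3 - (-b12 * u1 + b23 * u3) :=
        Dvd.dvd.sub (hgb.mul_right u3) (hgl.trans h2)
      simpa [mul_comm] using (by linarith [] : b23 * u3 - (-b12 * u1 + b23 * u3) = b12 * u1) ▸ this
    have h13 : g ∣ b13 * u1 := by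
      have : g ∣ -(-b13 * u1 - b23 * u2) - b23 * u2 :=
        Dvd.dvd.sub ((hgl.trans h3).neg_right) (hgb.mul_right u2)
      simpa using (by ring_nf : -(-b13 * u1 - b23 * u2) - b23 * u2 = b13 * u1) ▸ this
    have h23 : g ∣ b23 * u1 := hgb.mul_right u1
    have hl : g ∣ (ℓ : ℤ) * u1 := hgl.mul_right u1
    -- Bezout combination giving 1
    have e1 : b12 * Int.gcdA b12 b13 + b13 * Int.gcdB b12 b13 = (Int.gcd b12 b13 : ℤ) :=
      (Int.gcd_eq_gcd_ab b12 b13).symm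
    set g12 : ℤ := (Int.gcd b12 b13 : ℤ)
    have e2 : g12 * Int.gcdA g12 b23 + b23 * Int.gcdB g12 b23 = (Int.gcd g12 b23 : ℤ) :=
      (Int.gcd_eq_gcd_ab g12 b23).symm
    set g123 : ℤ := (Int.gcd g12 b23 : ℤ)
    have e3 : g123 * Int.gcdA g123 ℓ + ℓ * Int.gcdB g123 ℓ = (Int.gcd g123 ℓ : ℤ) :=
      (Int.gcd_eq_gcd_ab g123 (ℓ : ℤ)).symm
    have hone : (Int.gcd g123 (ℓ : ℤ) : ℤ) = 1 := by
      have : Int.gcd g123 (ℓ : ℤ) = 1 := by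
        simpa [Int.gcd, Int.natAbs_natCast, g123, g12] using hgcd
      exact_mod_cast this
    rw [hone] at e3
    -- express u1 as a combination
    set A1 := Int.gcdA b12 b13
    set B1 := Int.gcdB b12 b13
    set A2 := Int.gcdA g12 b23
    set B2 := Int.gcdB g12 b23
    set A3 := Int.gcdA g123 (ℓ : ℤ)
    set B3 := Int.gcdB g123 (ℓ : ℤ)
    have key : u1 = (b12 * u1) * (A1 * A2 * A3) + (b13 * u1) * (B1 * A2 * A3)
        + (b23 * u1) * (B2 * A3) + ((ℓ : ℤ) * u1) * B3 := by
      have : b12 * (A1 * A2 * A3) + b13 * (B1 * A2 * A3) + b23 * (B2 * A3) + (ℓ : ℤ) * B3 = 1 := by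
        calc b12 * (A1 * A2 * A3) + b13 * (B1 * A2 * A3) + b23 * (B2 * A3) + (ℓ : ℤ) * B3
            = (b12 * A1 + b13 * B1) * A2 * A3 + b23 * (B2 * A3) + (ℓ : ℤ) * B3 := by ring
          _ = (g12 * A2 + b23 * B2) * A3 + (ℓ : ℤ) * B3 := by rw [e1]; ring
          _ = g123 * A3 + (ℓ : ℤ) * B3 := by rw [e2]
          _ = 1 := e3
      linear_combination -u1 * this
    rw [key]
    exact dvd_add (dvd_add (dvd_add (h12.mul_right _) (h13.mul_right _)) (h23.mul_right _))
      (hl.mul_right _)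
  · intro d hd
    have h1 : d ∣ (ℓ : ℤ) := by
      apply hd (ℓ : ℤ) 0 0
      refine ⟨⟨0, by ring⟩, ⟨-b12, by ring⟩, ⟨-b13, by ring⟩⟩
    have h2 : d ∣ b23 := by
      apply hd b23 (-b13) b12
      refine ⟨⟨0, by ring⟩, ⟨0, by ring⟩, ⟨0, by ring⟩⟩
    exact Int.dvd_coe_gcd h2 h1
end

section
/- Let ℓ > 1 and let b_{12}, b_{13}, b_{23} be integers. Suppose for all 1 ≤ i ≤ 3 and all integers k, the diagonal tuple (ξ^{k b_{i1}}, ξ^{k b_{i2}}, ξ^{k b_{i3}}) (with b_{ii} = 0, b_{ji} = −b_{ij}, ξ primitive ℓ-th root of unity) is never of the form having exactly two coordinates equal to 1 and one coordinate ≠ 1. Then each gcd(b_{ij}, ℓ) divides gcd(b_{ik}, ℓ) for all pairs, i.e., gcd(b_{12}, ℓ) = gcd(b_{13}, ℓ) = gcd(b_{23}, ℓ). -/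
open Matrix

private lemma gcd_dvd_aux (ℓ : ℕ) (hℓ : 0 < ℓ) (a b : ℤ)
    (h : ∀ κ : ℤ, (ℓ : ℤ) ∣ κ * a → (ℓ : ℤ) ∣ κ * b) :
    Int.gcd a ℓ ∣ Int.gcd b ℓ := by
  set ga := Int.gcd a ℓ with hga
  have hgaℓ : ga ∣ ℓ := by
    have : a.natAbs.gcd (ℓ : ℤ).natAbs ∣ ℓ := by
      simpa using Nat.gcd_dvd_right a.natAbs ℓ
    exact this
  set m : ℕ := ℓ / ga with hm
  have hmul : ga * m = ℓ := Nat.mul_div_cancel' hgaℓ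
  have hm0 : (m : ℤ) ≠ 0 := by
    have : m ≠ 0 := by
      rintro h0
      rw [h0, Nat.mul_zero] at hmul
      omega
    exact_mod_cast this
  have hcast : ((ga * m : ℕ) : ℤ) = (ℓ : ℤ) := by exact_mod_cast congrArg Nat.cast hmul
  have hdvda : (ℓ : ℤ) ∣ (m : ℤ) * a := by
    obtain ⟨a', ha'⟩ := Int.gcd_dvd_left (a := a) (b := (ℓ : ℤ))
    refine ⟨a', ?_⟩
    calc (m : ℤ) * a = ((ga * m : ℕ) : ℤ) * a' := by rw [ha']; push_cast; ring
      _ = (ℓ : ℤ) * a' := by rw [hcast]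
  have hdvdb : (ℓ : ℤ) ∣ (m : ℤ) * b := h _ hdvda
  have hgab : (ga : ℤ) ∣ b := by
    rw [← hcast] at hdvdb
    push_cast at hdvdb
    rw [mul_comm (m : ℤ) b] at hdvdb
    exact (mul_dvd_mul_iff_right hm0).mp hdvdb
  have : (ga : ℤ) ∣ (Int.gcd b ℓ : ℤ) :=
    Int.dvd_coe_gcd hgab (Int.natCast_dvd_natCast.mpr hgaℓ)
  exact_mod_cast this

/-- Let `ℓ > 1`, `ξ` a primitive `ℓ`-th root of unity, and `B` the 3×3
skew-symmetric integer matrix with above-diagonal entries `b₁₂, b₁₃, b₂₃`. If for all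
`i` and all integers `κ` the tuple `(ξ^{κ b_{i1}}, ξ^{κ b_{i2}}, ξ^{κ b_{i3}})` never
has exactly one coordinate different from 1, then
`gcd(b₁₂, ℓ) = gcd(b₁₃, ℓ) = gcd(b₂₃, ℓ)`. -/
theorem stmt_14 (k : Type*) [Field k] [CharZero k] (ℓ : ℕ) (hℓ : 1 < ℓ)
    (ξ : k) (hξ : IsPrimitiveRoot ξ ℓ)
    (B : Matrix (Fin 3) (Fin 3) ℤ) (hskew : Bᵀ = -B)
    (hnoreflect : ∀ (i : Fin 3) (κ : ℤ), ¬ (∃! s : Fin 3, ξ ^ (κ * B i s) ≠ 1)) :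
    Int.gcd (B 0 1) ℓ = Int.gcd (B 0 2) ℓ ∧ Int.gcd (B 0 2) ℓ = Int.gcd (B 1 2) ℓ := by
  have hℓ0 : 0 < ℓ := by omega
  have hdiag : ∀ i : Fin 3, B i i = 0 := by
    intro i
    have := congrFun (congrFun hskew i) i
    simp [Matrix.transpose_apply] at this
    omega
  -- key: in row i, if ℓ ∣ κ * B i s then ℓ ∣ κ * B i t, for s ≠ t both ≠ i
  have key : ∀ (i s t : Fin 3), s ≠ i → t ≠ i → s ≠ t →
      ∀ κ : ℤ, (ℓ : ℤ) ∣ κ * B i s → (ℓ : ℤ) ∣ κ * B i t := by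
    intro i s t hsi hti hst κ hdvd
    by_contra hnd
    apply hnoreflect i κ
    refine ⟨t, ?_, ?_⟩
    · show ξ ^ (κ * B i t) ≠ 1
      intro h1
      exact hnd ((hξ.zpow_eq_one_iff_dvd _).mp h1)
    · intro y hy
      by_contra hyt
      have hone : ξ ^ (κ * B i y) = 1 := by
        rw [hξ.zpow_eq_one_iff_dvd]
        have : y = s ∨ y = i := by
          fin_cases i <;> fin_cases s <;> fin_cases t <;> fin_cases y <;>
            simp_all
        rcases this with h | h
        · rw [h]; exact hdvd
        · rw [h, hdiag, mul_zero]
          exact dvd_zero _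
      exact hy hone
  have e01_02 : Int.gcd (B 0 1) ℓ = Int.gcd (B 0 2) ℓ :=
    Nat.dvd_antisymm
      (gcd_dvd_aux ℓ hℓ0 _ _ (key 0 1 2 (by decide) (by decide) (by decide)))
      (gcd_dvd_aux ℓ hℓ0 _ _ (key 0 2 1 (by decide) (by decide) (by decide)))
  have hB10 : B 1 0 = -B 0 1 := by
    have := congrFun (congrFun hskew 0) 1
    simpa [Matrix.transpose_apply] using this
  have e10_12 : Int.gcd (B 1 0) ℓ = Int.gcd (B 1 2) ℓ :=
    Nat.dvd_antisymm
      (gcd_dvd_aux ℓ hℓ0 _ _ (key 1 0 2 (by decide) (by decide) (by decide)))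
      (gcd_dvd_aux ℓ hℓ0 _ _ (key 1 2 0 (by decide) (by decide) (by decide)))
  have e01_12 : Int.gcd (B 0 1) ℓ = Int.gcd (B 1 2) ℓ := by
    rw [← e10_12, hB10, Int.neg_gcd]
  exact ⟨e01_02, by rw [← e01_02, e01_12]⟩
end

section
/- Let ℓ > 1 and B = (b_{ij}) a 4×4 skew-symmetric integer matrix with gcd of all entries and ℓ equal to 1, and suppose ℓ divides pf(B). Fix a nonzero λ ∈ ℤ/ℓℤ. If λ·b_{12} ≡ λ·b_{13} ≡ λ·b_{23} ≡ 0 mod ℓ, and additionally for every index j there is no 'partial annihilation' (i.e., condition (2) of Proposition 3.5 holds: there is no index j and integer k with ℓ | k·b_{ij} for all but exactly one i), then λ·b_{i j} ≡ 0 mod ℓ for all pairs i < j — contradicting gcd(b_{ij}, ℓ) = 1 when λ ≠ 0. -/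
open Matrix

lemma key_gcd {ℓ : ℕ} {lam a b : ℤ} (ha : (ℓ:ℤ) ∣ lam * a) (hb : (ℓ:ℤ) ∣ lam * b) :
    (ℓ:ℤ) ∣ lam * (Int.gcd a b : ℤ) := by
  rw [Int.gcd_eq_gcd_ab a b, mul_add]
  exact dvd_add (by rw [← mul_assoc]; exact ha.mul_right _)
                (by rw [← mul_assoc]; exact hb.mul_right _)

/-- Let `ℓ > 1` and `B` a 4×4 skew-symmetric integer matrix with the gcd
of all above-diagonal entries and `ℓ` equal to 1, and `ℓ ∣ pf(B)`. Fix `λ` (an integer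
representing a nonzero class mod `ℓ`, i.e. `ℓ ∤ λ`). If `λ·b₁₂ ≡ λ·b₁₃ ≡ λ·b₂₃ ≡ 0 (mod ℓ)`
and condition (2) of Proposition 3.5 holds (no partial annihilation), then
`λ·b_{ij} ≡ 0 (mod ℓ)` for all pairs — contradicting the gcd condition, i.e. `False`. -/
theorem stmt_15 (ℓ : ℕ) (hℓ : 1 < ℓ) (B : Matrix (Fin 4) (Fin 4) ℤ)
    (hskew : Bᵀ = -B)
    (hgcd : Nat.gcd (Nat.gcd (Nat.gcd (Nat.gcd (Nat.gcd
        (B 0 1).natAbs (B 0 2).natAbs) (B 0 3).natAbs)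
        (B 1 2).natAbs) (B 1 3).natAbs) (Nat.gcd (B 2 3).natAbs ℓ) = 1)
    (hpf : (ℓ : ℤ) ∣ B 0 1 * B 2 3 - B 0 2 * B 1 3 + B 0 3 * B 1 2)
    (lam : ℤ) (hlam : ¬ (ℓ : ℤ) ∣ lam)
    (h12 : (ℓ : ℤ) ∣ lam * B 0 1)
    (h13 : (ℓ : ℤ) ∣ lam * B 0 2)
    (h23 : (ℓ : ℤ) ∣ lam * B 1 2)
    (hcond2 : ¬ ∃ (j i₀ : Fin 4) (κ : ℤ),
        (∀ i, i ≠ i₀ → (ℓ : ℤ) ∣ κ * B i j) ∧ ¬ (ℓ : ℤ) ∣ κ * B i₀ j) :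
    False := by
  push_neg at hcond2
  have hs : ∀ i j : Fin 4, B j i = -B i j := by
    intro i j
    have := congrFun (congrFun hskew i) j
    simpa [Matrix.transpose_apply] using this
  have hdiag : ∀ i : Fin 4, B i i = 0 := by
    intro i; have := hs i i; linarith
  have h21 : (ℓ:ℤ) ∣ lam * B 1 0 := by rw [hs 0 1]; simpa using h12.neg_right
  have h31 : (ℓ:ℤ) ∣ lam * B 2 0 := by rw [hs 0 2]; simpa using h13.neg_right
  have h32 : (ℓ:ℤ) ∣ lam * B 2 1 := by rw [hs 1 2]; simpa using h23.neg_right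
  have h14 : (ℓ:ℤ) ∣ lam * B 0 3 := by
    have := hcond2 0 3 lam (by
      intro i hi
      fin_cases i
      · simp [hdiag]
      · exact h21
      · exact h31
      · simp at hi)
    rw [hs 0 3] at this
    simpa using this.neg_right
  have h24 : (ℓ:ℤ) ∣ lam * B 1 3 := by
    have := hcond2 1 3 lam (by
      intro i hi
      fin_cases i
      · exact h12
      · simp [hdiag]
      · exact h32
      · simp at hi)
    rw [hs 1 3] at this
    simpa using this.neg_right
  have h34 : (ℓ:ℤ) ∣ lam * B 2 3 := by
    exact hcond2 3 2 lam (by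
      intro i hi
      fin_cases i
      · exact h14
      · exact h24
      · simp at hi
      · simp [hdiag])
  have hℓself : (ℓ:ℤ) ∣ lam * (ℓ:ℤ) := Dvd.dvd.mul_left dvd_rfl lam
  have g1 := key_gcd h12 h13
  have g2 := key_gcd g1 h14
  have g3 := key_gcd g2 h23
  have g4 := key_gcd g3 h24
  have g5 := key_gcd h34 hℓself
  have g6 := key_gcd g4 g5
  have : (ℓ:ℤ) ∣ lam := by
    simp only [Int.gcd, Int.natAbs_natCast] at g6
    rw [hgcd] at g6
    simpa using g6
  exact hlam this
end

section
/- Let ℓ > 1 and let B be an n×n skew-symmetric integer matrix whose abover-diagonal entries b_{ij} define roots of unity p_{ij} = ξ^{b_{ij}} (ξ primitive of order ℓ) with orders o(p_{ij}) = ℓ/gcd(b_{ij}, ℓ) pairwise coprime for i < j, and with the product of all orders equal to ℓ. Then for every prime p dividing ℓ, the reduction of B modulo p^{ν_p(ℓ)} has exactly one pair (i, j) with ν_p(b_{ij}) < ν_p(ℓ); hence over ℤ_{(p)}, B is equivalent to the block matrix diag([[0, b],[−b, 0]], 0, …, 0) for some b with ν_p(b) = ν_p(b_{ij}), so the mod-p^{ν_p(ℓ)}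 kernel of B has rank-pattern generated by p^{ν_p(ℓ)−ν_p(b)}·e_1, p^{ν_p(ℓ)−ν_p(b)}·e_2, e_3, …, e_n (after permuting indices). -/
lemma natCast_dvd_iff (m : ℕ) (z : ℤ) : (↑m ∣ z) ↔ m ∣ z.natAbs := by
  rw [← Int.natAbs_dvd_natAbs, Int.natAbs_natCast]

lemma aux_dvd {p : ℕ} (hp : p.Prime) {bn : ℕ} (hbn : bn ≠ 0) {a ν : ℕ}
    (ha : bn.factorization p = a) (hle : a ≤ ν) (y : ℕ) :
    p ^ ν ∣ bn * y ↔ p ^ (ν - a) ∣ y := by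
  rcases eq_or_ne y 0 with rfl | hy
  · simp
  constructor
  · intro h
    rw [Nat.Prime.pow_dvd_iff_le_factorization hp (by positivity)] at h
    rw [Nat.factorization_mul hbn hy, Finsupp.add_apply, ha] at h
    rw [Nat.Prime.pow_dvd_iff_le_factorization hp hy]
    omega
  · rintro ⟨c, rfl⟩
    obtain ⟨d, hd⟩ : p ^ a ∣ bn := ha ▸ Nat.ordProj_dvd bn p
    refine ⟨d * c, ?_⟩
    calc bn * (p ^ (ν - a) * c) = (p ^ a * p ^ (ν - a)) * (d * c) := by rw [hd]; ring
      _ = p ^ ν * (d * c) := by rw [← pow_add, Nat.add_sub_cancel' hle]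

lemma zmod_mul_eq_zero {N : ℕ} [NeZero N] (b : ℤ) (y : ZMod N) :
    (b : ZMod N) * y = 0 ↔ N ∣ b.natAbs * y.val := by
  have h1 : ((y.val : ℕ) : ZMod N) = y := by simp [ZMod.natCast_val, ZMod.cast_id]
  conv_lhs => rw [← h1]
  rw [show (b : ZMod N) * ((y.val : ℕ) : ZMod N) = ((b * (y.val : ℤ) : ℤ) : ZMod N) by push_cast; ring]
  rw [ZMod.intCast_zmod_eq_zero_iff_dvd, natCast_dvd_iff, Int.natAbs_mul, Int.natAbs_natCast]

lemma ann_iff {p ν : ℕ} (hp : p.Prime) [NeZero (p ^ ν)] {b : ℤ}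
    (hbd : ¬ ((p : ℤ) ^ ν ∣ b)) (y : ZMod (p ^ ν)) :
    (b : ZMod (p ^ ν)) * y = 0 ↔
      ∃ c, y = (p : ZMod (p ^ ν)) ^ (ν - b.natAbs.factorization p) * c := by
  have hb0 : b ≠ 0 := by rintro rfl; exact hbd (dvd_zero _)
  have hbn0 : b.natAbs ≠ 0 := Int.natAbs_ne_zero.mpr hb0
  set a := b.natAbs.factorization p with ha
  have hbd' : ¬ (p ^ ν ∣ b.natAbs) := fun h => hbd (by
    rw [show ((p : ℤ)) ^ ν = ((p ^ ν : ℕ) : ℤ) by push_cast; ring, natCast_dvd_iff]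
    exact h)
  have hlt : a < ν := by
    by_contra h
    exact hbd' ((pow_dvd_pow p (le_of_not_gt h)).trans (Nat.ordProj_dvd b.natAbs p))
  rw [zmod_mul_eq_zero, aux_dvd hp hbn0 ha.symm hlt.le]
  constructor
  · rintro ⟨c, hc⟩
    refine ⟨(c : ZMod (p ^ ν)), ?_⟩
    have h1 : ((y.val : ℕ) : ZMod (p ^ ν)) = y := by simp [ZMod.natCast_val, ZMod.cast_id]
    rw [← h1, hc]
    push_cast
    ring
  · rintro ⟨c, rfl⟩
    have hk : p ^ (ν - a) ∣ p ^ ν := pow_dvd_pow p (Nat.sub_le _ _)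
    have h5 : (p : ZMod (p ^ ν)) ^ (ν - a) * c = ((p ^ (ν - a) * c.val : ℕ) : ZMod (p ^ ν)) := by
      push_cast
      simp [ZMod.natCast_val, ZMod.cast_id]
    rw [h5, ZMod.val_natCast]
    exact (Nat.dvd_mod_iff hk).mpr ⟨c.val, rfl⟩

open Matrix

/-- Let `ℓ > 1` and `B` an `n×n` skew-symmetric integer matrix whose
above-diagonal entries define roots of unity `p_{ij} = ξ^{b_{ij}}` of pairwise
coprime orders `o_{ij} = ℓ / gcd(b_{ij}, ℓ)` whose product is `ℓ`. Then for every
prime `p ∣ ℓ` there is exactly one pair `i < j` with `ν_p(b_{ij}) < ν_p(ℓ)`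
(expressed as `p^{ν_p(ℓ)} ∤ b_{ij}`), and for that pair the kernel of `B` modulo
`p^{ν_p(ℓ)}` is spanned by `p^{ν_p(ℓ)−ν_p(b_{ij})}·e_i`, `p^{ν_p(ℓ)−ν_p(b_{ij})}·e_j`
and the standard basis vectors `e_s` for `s ∉ {i, j}`. -/
theorem stmt_17 (ℓ n : ℕ) (hℓ : 1 < ℓ)
    (B : Matrix (Fin n) (Fin n) ℤ) (hskew : Bᵀ = -B)
    (o : Fin n × Fin n → ℕ)
    (ho : ∀ pr : Fin n × Fin n, o pr = ℓ / Nat.gcd (B pr.1 pr.2).natAbs ℓ)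
    (hcop : ∀ pr qr : Fin n × Fin n,
      pr.1 < pr.2 → qr.1 < qr.2 → pr ≠ qr → Nat.Coprime (o pr) (o qr))
    (hprod : ∏ pr ∈ Finset.univ.filter (fun pr : Fin n × Fin n => pr.1 < pr.2),
      o pr = ℓ) :
    ∀ p : ℕ, p.Prime → p ∣ ℓ →
      (∃! pr : Fin n × Fin n, pr.1 < pr.2 ∧
          ¬ ((p : ℤ) ^ (ℓ.factorization p) ∣ B pr.1 pr.2)) ∧
      (∀ pr : Fin n × Fin n, pr.1 < pr.2 →
          ¬ ((p : ℤ) ^ (ℓ.factorization p) ∣ B pr.1 pr.2) →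
        LinearMap.ker
            ((B.map (Int.cast : ℤ → ZMod (p ^ ℓ.factorization p))).mulVecLin)
          = Submodule.span (ZMod (p ^ ℓ.factorization p))
            ({Pi.single pr.1 ((p : ZMod (p ^ ℓ.factorization p)) ^
                (ℓ.factorization p - (B pr.1 pr.2).natAbs.factorization p)),
              Pi.single pr.2 ((p : ZMod (p ^ ℓ.factorization p)) ^
                (ℓ.factorization p - (B pr.1 pr.2).natAbs.factorization p))} ∪
              (fun j => Pi.single j (1 : ZMod (p ^ ℓ.factorization p))) ''
                {j : Fin n | j ≠ pr.1 ∧ j ≠ pr.2})) := by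
  intro p hp hpl
  have hℓ0 : ℓ ≠ 0 := by omega
  -- Claim A : p ∣ o pr ↔ ¬ (p^ν ∣ B pr.1 pr.2)
  have hA : ∀ pr : Fin n × Fin n,
      (p ∣ o pr ↔ ¬ ((p : ℤ) ^ (ℓ.factorization p) ∣ B pr.1 pr.2)) := by
    intro pr
    set bn := (B pr.1 pr.2).natAbs with hbn
    set g := Nat.gcd bn ℓ with hg
    have hg0 : g ≠ 0 := (Nat.gcd_pos_of_pos_right bn (by omega)).ne'
    have hgl : g ∣ ℓ := Nat.gcd_dvd_right _ _
    have h1 : ((p : ℤ) ^ (ℓ.factorization p) ∣ B pr.1 pr.2) ↔ p ^ (ℓ.factorization p) ∣ bn := by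
      rw [show ((p : ℤ)) ^ (ℓ.factorization p) = ((p ^ (ℓ.factorization p) : ℕ) : ℤ) by
        push_cast; ring, natCast_dvd_iff]
    have hpν : p ^ (ℓ.factorization p) ∣ ℓ := Nat.ordProj_dvd ℓ p
    have h2 : p ^ (ℓ.factorization p) ∣ bn ↔ p ^ (ℓ.factorization p) ∣ g :=
      ⟨fun h => Nat.dvd_gcd h hpν, fun h => h.trans (Nat.gcd_dvd_left _ _)⟩
    have hd0 : ℓ / g ≠ 0 := fun h => hℓ0 (by rw [← Nat.div_mul_cancel hgl, h, zero_mul])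
    have hgle : g.factorization p ≤ ℓ.factorization p := by
      have := (Nat.factorization_le_iff_dvd hg0 hℓ0).mpr hgl
      exact this p
    have h3 : p ∣ ℓ / g ↔ ¬ p ^ (ℓ.factorization p) ∣ g := by
      rw [Nat.Prime.pow_dvd_iff_le_factorization hp hg0,
          Nat.Prime.dvd_iff_one_le_factorization hp hd0, Nat.factorization_div hgl,
          Finsupp.tsub_apply]
      omega
    rw [ho pr, h3, h1, h2]
  -- Existence and uniqueness
  have hEU : ∃! pr : Fin n × Fin n, pr.1 < pr.2 ∧
      ¬ ((p : ℤ) ^ (ℓ.factorization p) ∣ B pr.1 pr.2) := by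
    obtain ⟨pr, hprm, hpdvd⟩ := hp.prime.exists_mem_finset_dvd (hprod ▸ hpl)
    rw [Finset.mem_filter] at hprm
    refine ⟨pr, ⟨hprm.2, (hA pr).mp hpdvd⟩, ?_⟩
    rintro qr ⟨hq1, hq2⟩
    by_contra hne
    have hcp := hcop pr qr hprm.2 hq1 (Ne.symm hne)
    have : p ∣ Nat.gcd (o pr) (o qr) := Nat.dvd_gcd hpdvd ((hA qr).mpr hq2)
    rw [hcp] at this
    exact hp.one_lt.ne' (Nat.dvd_one.mp this)
  refine ⟨hEU, ?_⟩
  -- Kernel computation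
  intro pr hij hnd
  haveI : NeZero (p ^ ℓ.factorization p) := ⟨(pow_pos hp.pos _).ne'⟩
  set R := ZMod (p ^ ℓ.factorization p) with hR
  set b := B pr.1 pr.2 with hb
  set β : R := (b : R) with hβ
  set a := b.natAbs.factorization p with ha
  set M := B.map (Int.cast : ℤ → R) with hMdef
  have hijne : pr.1 ≠ pr.2 := ne_of_lt hij
  have hdiag : ∀ s, B s s = 0 := by
    intro s
    have := congrFun (congrFun hskew s) s
    simp only [Matrix.transpose_apply, Matrix.neg_apply] at this
    omega
  have hsym : ∀ s t, B t s = -B s t := by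
    intro s t
    have := congrFun (congrFun hskew s) t
    simpa only [Matrix.transpose_apply, Matrix.neg_apply] using this
  obtain ⟨pr0, hpr0, hun⟩ := id hEU
  have hzero : ∀ s t : Fin n, s < t → (s, t) ≠ pr → (p : ℤ) ^ (ℓ.factorization p) ∣ B s t := by
    intro s t hst hne
    by_contra h
    exact hne ((hun (s, t) ⟨hst, h⟩).trans (hun pr ⟨hij, hnd⟩).symm)
  have hM : ∀ s t : Fin n, ¬(s = pr.1 ∧ t = pr.2) → ¬(s = pr.2 ∧ t = pr.1) → M s t = 0 := by
    intro s t h1 h2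
    show ((B s t : ℤ) : R) = 0
    rcases lt_trichotomy s t with h | h | h
    · have : (s, t) ≠ pr := fun he => h1 ⟨congrArg Prod.fst he, congrArg Prod.snd he⟩
      rw [ZMod.intCast_zmod_eq_zero_iff_dvd]
      have := hzero s t h this
      exact_mod_cast (by push_cast; exact this : ((p ^ ℓ.factorization p : ℕ) : ℤ) ∣ B s t)
    · subst h; rw [hdiag, Int.cast_zero]
    · have : (t, s) ≠ pr := fun he => h2 ⟨congrArg Prod.snd he, congrArg Prod.fst he⟩
      rw [hsym t s, Int.cast_neg, neg_eq_zero, ZMod.intCast_zmod_eq_zero_iff_dvd]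
      have := hzero t s h this
      exact_mod_cast (by push_cast; exact this : ((p ^ ℓ.factorization p : ℕ) : ℤ) ∣ B t s)
  have hrow1 : ∀ x : Fin n → R, M.mulVec x pr.1 = β * x pr.2 := by
    intro x
    show (∑ t, M pr.1 t * x t) = β * x pr.2
    refine (Finset.sum_eq_single pr.2 ?_ ?_)
    · intro t _ ht
      rw [hM pr.1 t (fun h => ht h.2) (fun h => hijne h.1), zero_mul]
    · intro h; exact absurd (Finset.mem_univ _) h
  have hrow2 : ∀ x : Fin n → R, M.mulVec x pr.2 = -β * x pr.1 := by
    intro x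
    have hM21 : M pr.2 pr.1 = -β := by
      show ((B pr.2 pr.1 : ℤ) : R) = -β
      rw [hsym pr.1 pr.2, Int.cast_neg]
    show (∑ t, M pr.2 t * x t) = -β * x pr.1
    have hs := Finset.sum_eq_single (s := Finset.univ) (f := fun t => M pr.2 t * x t) pr.1
      (fun t _ ht => by
        show M pr.2 t * x t = 0
        rw [hM pr.2 t (fun h => hijne h.1.symm) (fun h => ht h.2), zero_mul])
      (fun h => absurd (Finset.mem_univ _) h)
    rw [hs]
    show M pr.2 pr.1 * x pr.1 = -β * x pr.1
    rw [hM21]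
  have hrow3 : ∀ (x : Fin n → R) (s : Fin n), s ≠ pr.1 → s ≠ pr.2 → M.mulVec x s = 0 := by
    intro x s hs1 hs2
    show (∑ t, M s t * x t) = 0
    refine Finset.sum_eq_zero fun t _ => ?_
    rw [hM s t (fun h => hs1 h.1) (fun h => hs2 h.1), zero_mul]
  have hker : ∀ x : Fin n → R, M.mulVec x = 0 ↔ (β * x pr.1 = 0 ∧ β * x pr.2 = 0) := by
    intro x
    constructor
    · intro h
      constructor
      · have h2 := congrFun h pr.2
        rw [hrow2, Pi.zero_apply, neg_mul, neg_eq_zero] at h2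
        exact h2
      · have h1 := congrFun h pr.1
        rw [hrow1, Pi.zero_apply] at h1
        exact h1
    · rintro ⟨h1, h2⟩
      funext s
      rw [Pi.zero_apply]
      rcases eq_or_ne s pr.1 with rfl | hs1
      · rw [hrow1]; exact h2
      rcases eq_or_ne s pr.2 with rfl | hs2
      · rw [hrow2, neg_mul, neg_eq_zero]; exact h1
      · exact hrow3 x s hs1 hs2
  have hann := fun y : R => ann_iff (ν := ℓ.factorization p) hp (b := b) hnd y
  apply le_antisymm
  · -- ker ⊆ span
    intro x hx
    rw [LinearMap.mem_ker, Matrix.mulVecLin_apply, hker] at hx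
    obtain ⟨ci, hci⟩ := (hann (x pr.1)).mp hx.1
    obtain ⟨cj, hcj⟩ := (hann (x pr.2)).mp hx.2
    rw [← Finset.univ_sum_single x]
    refine Submodule.sum_mem _ fun s _ => ?_
    rcases eq_or_ne s pr.1 with rfl | hs1
    · have : (Pi.single pr.1 (x pr.1) : Fin n → R) =
          ci • (Pi.single pr.1 ((p : R) ^ (ℓ.factorization p - a)) : Fin n → R) := by
        rw [hci]; funext t
        rcases eq_or_ne t pr.1 with rfl | ht
        · simp [mul_comm, ha]
        · simp [Pi.single_eq_of_ne ht]
      rw [this]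
      exact Submodule.smul_mem _ _ (Submodule.subset_span (Or.inl (Set.mem_insert _ _)))
    rcases eq_or_ne s pr.2 with rfl | hs2
    · have : (Pi.single pr.2 (x pr.2) : Fin n → R) =
          cj • (Pi.single pr.2 ((p : R) ^ (ℓ.factorization p - a)) : Fin n → R) := by
        rw [hcj]; funext t
        rcases eq_or_ne t pr.2 with rfl | ht
        · simp [mul_comm, ha]
        · simp [Pi.single_eq_of_ne ht]
      rw [this]
      exact Submodule.smul_mem _ _
        (Submodule.subset_span (Or.inl (Set.mem_insert_of_mem _ rfl)))
    · have : (Pi.single s (x s) : Fin n → R) = (x s) • (Pi.single s (1 : R) : Fin n → R) := by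
        funext t
        rcases eq_or_ne t s with rfl | ht
        · simp
        · simp [Pi.single_eq_of_ne ht]
      rw [this]
      exact Submodule.smul_mem _ _
        (Submodule.subset_span (Or.inr ⟨s, ⟨hs1, hs2⟩, rfl⟩))
  · -- span ⊆ ker
    rw [Submodule.span_le]
    rintro v (hv | ⟨s, ⟨hs1, hs2⟩, rfl⟩)
    · have hβq : β * (p : R) ^ (ℓ.factorization p - a) = 0 :=
        (hann _).mpr ⟨1, (mul_one _).symm⟩
      rcases hv with rfl | rfl
      · rw [SetLike.mem_coe, LinearMap.mem_ker, Matrix.mulVecLin_apply, hker]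
        constructor
        · rw [Pi.single_eq_same]; exact hβq
        · rw [Pi.single_eq_of_ne (Ne.symm hijne), mul_zero]
      · rw [SetLike.mem_coe, LinearMap.mem_ker, Matrix.mulVecLin_apply, hker]
        constructor
        · rw [Pi.single_eq_of_ne hijne, mul_zero]
        · rw [Pi.single_eq_same]; exact hβq
    · rw [SetLike.mem_coe, LinearMap.mem_ker, Matrix.mulVecLin_apply, hker]
      constructor
      · show β * (Pi.single s (1 : R) : Fin n → R) pr.1 = 0
        rw [Pi.single_eq_of_ne (Ne.symm hs1), mul_zero]
      · show β * (Pi.single s (1 : R) : Fin n → R) pr.2 = 0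
        rw [Pi.single_eq_of_ne (Ne.symm hs2), mul_zero]
end
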